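/- For n = 2k+1 odd, the generalized Radon transform on ℝⁿ with the local kernel u = δ^{(k)} (the k-th derivative of the Dirac delta on ℝ) satisfies |ũ(c)| = |c|^{(n−1)/2}, and hence defines a unitary (generalized Fourier) transform; moreover δ^{(k)} is, up to modulus-one factor, the unique derivative of the delta function with this property. -/

import Mathlib

open Complex

lemma norm_I_mul_ofReal_pow (c : ℝ) (m : ℕ) : ‖(I * (c : ℂ)) ^ m‖ = |c| ^ m := by
  rw [norm_pow, norm_mul, norm_I, one_mul, norm_real, Real.norm_eq_abs]

lemma eq_of_forall_abs_pow_eq {m k : ℕ} (h : ∀ c : ℝ, |c| ^ m = |c| ^ k) : m = k := by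
  have h2 : (2 : ℝ) ^ m = 2 ^ k := by simpa using h 2
  exact pow_right_injective₀ two_pos (by norm_num) h2

/-- For odd `n = 2k+1`, the kernel `u = δ^{(k)}`, whose Fourier transform is
`c ↦ (ic)^k`, satisfies the unitarity criterion `|ũ(c)| = |c|^{(n-1)/2}`, hence the
associated generalized Radon transform is a generalized Fourier transform; moreover among
the derivatives `δ^{(m)}` of the delta function (Fourier transforms `c ↦ (ic)^m`), `m = k`
is the unique one with this property. -/
theorem delta_derivative_kernel
    (k n : ℕ) (hn : n = 2 * k + 1) :
    -- the criterion |ũ(c)| = |c|^{(n-1)/2} holds for ũ(c) = (ic)^k ...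
    (∀ c : ℝ, ‖(Complex.I * (c : ℂ)) ^ k‖ = |c| ^ (((n : ℝ) - 1)/2)) ∧
    -- ... and δ^{(k)} is the unique derivative of δ with this property
    (∀ m : ℕ, (∀ c : ℝ, ‖(Complex.I * (c : ℂ)) ^ m‖ = |c| ^ (((n : ℝ) - 1)/2)) → m = k) := by
  have hexp : ((n : ℝ) - 1) / 2 = k := by
    subst hn
    push_cast
    ring
  simp only [norm_I_mul_ofReal_pow, hexp, Real.rpow_natCast]
  exact ⟨fun _ => trivial, fun _ => eq_of_forall_abs_pow_eq⟩
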